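/- arXiv:2101.06550 — 2 statements merged into one kernel-verified Lean document; each statement's English description precedes it below -/
import Mathlib

section
/- Energy decay in the droplet model: with the Lagrange multiplier λ = ū, the free energy F = Σᵢ (1/2)Rᵢ² - λ(Σᵢ (1/3)Rᵢ³ - V₀/(4π)) satisfies dF/dt = -Σᵢ (H(Rᵢ)/Rᵢ)(1 - ū Rᵢ)² ≤ 0 along solutions of dRᵢ/dt = H(Rᵢ)(-1/Rᵢ² + ū/Rᵢ). -/
noncomputable def Hside (r : ℝ) : ℝ := if 0 < r then 1 else 0

/-!
On the constraint surface the multiplier term of `F` vanishes identically, so `F = ∑ Rᵢ²/2` and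
`dF/dt = ∑ Rᵢ Ṙᵢ = ∑ H(Rᵢ) (ū - 1/Rᵢ)`. Expanding the squares, `∑ (H(Rᵢ)/Rᵢ)(1 - ū Rᵢ)²` equals
`∑ H(Rᵢ)/Rᵢ - 2ū ∑ H(Rᵢ) + ū² ∑ H(Rᵢ) Rᵢ`, and the choice `ū = ∑ H(Rᵢ) / ∑ H(Rᵢ) Rᵢ` turns the last
term into `ū ∑ H(Rᵢ)`, which gives the identity.
-/

open Finset

lemma Hside_div_nonneg (r : ℝ) : 0 ≤ Hside r / r := by
  unfold Hside
  split_ifs with hr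
  · exact div_nonneg zero_le_one hr.le
  · simp

lemma mul_Hside_mul_droplet_rate (r u : ℝ) :
    r * (Hside r * (-(1 / r ^ 2) + u / r)) = Hside r * (u - 1 / r) := by
  unfold Hside
  split_ifs with hr
  · field_simp
    ring
  · simp

lemma Hside_div_mul_sq (r u : ℝ) :
    Hside r / r * (1 - u * r) ^ 2 = Hside r / r - 2 * u * Hside r + u ^ 2 * (Hside r * r) := by
  unfold Hside
  split_ifs with hr
  · field_simp
    ring
  · simp

lemma div_sq_mul_self {K : Type*} [Field K] (a b : K) : (a / b) ^ 2 * b = a / b * a := by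
  rcases eq_or_ne b 0 with rfl | hb
  · simp
  · field_simp

lemma sum_Hside_div_mul_sq {ι : Type*} [Fintype ι] (r : ι → ℝ) (u : ℝ)
    (hu : u = (∑ j, Hside (r j)) / (∑ j, Hside (r j) * r j)) :
    ∑ i, Hside (r i) / r i * (1 - u * r i) ^ 2 = -∑ i, Hside (r i) * (u - 1 / r i) := by
  have hmult : u ^ 2 * ∑ i, Hside (r i) * r i = u * ∑ i, Hside (r i) := by
    rw [hu, div_sq_mul_self]
  calc ∑ i, Hside (r i) / r i * (1 - u * r i) ^ 2
      = ∑ i, Hside (r i) / r i - 2 * u * ∑ i, Hside (r i) + u ^ 2 * ∑ i, Hside (r i) * r i := by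
        simp only [Hside_div_mul_sq, sum_add_distrib, sum_sub_distrib, mul_sum]
    _ = ∑ i, Hside (r i) / r i - u * ∑ i, Hside (r i) := by rw [hmult]; ring
    _ = -∑ i, Hside (r i) * (u - 1 / r i) := by
        simp only [mul_sub, sum_sub_distrib, mul_one_div, mul_comm _ u, ← mul_sum]
        ring

lemma sum_third_cube_sub_eq_zero {ι : Type*} [Fintype ι] (r : ι → ℝ) (V₀ : ℝ)
    (hvol : ∑ i, (4 * Real.pi / 3) * r i ^ 3 = V₀) :
    (∑ i, (1 / 3) * r i ^ 3) - V₀ / (4 * Real.pi) = 0 := by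
  rw [sub_eq_zero, eq_div_iff (by positivity), ← hvol, sum_mul]
  exact sum_congr rfl fun i _ => by ring

lemma hasDerivAt_sum_half_sq {ι : Type*} [Fintype ι] (R : ι → ℝ → ℝ) (R' : ι → ℝ) (t : ℝ)
    (hR : ∀ i, HasDerivAt (R i) (R' i) t) :
    HasDerivAt (fun τ => ∑ i, (1 / 2) * R i τ ^ 2) (∑ i, R i t * R' i) t := by
  refine (HasDerivAt.fun_sum fun i _ => ((hR i).fun_pow 2).const_mul (1 / 2 : ℝ)).congr_deriv
    (sum_congr rfl fun i _ => ?_)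
  push_cast
  ring

theorem droplet_energy_decay_general (N : ℕ) (R : Fin N → ℝ → ℝ) (V₀ t : ℝ)
    (ubar : ℝ → ℝ)
    (hubar : ∀ τ, ubar τ = (∑ j, Hside (R j τ)) / (∑ j, Hside (R j τ) * R j τ))
    (hvol : ∀ τ, ∑ i, (4 * Real.pi / 3) * (R i τ) ^ 3 = V₀)
    (hode : ∀ i, HasDerivAt (R i)
      (Hside (R i t) * (-(1 / (R i t) ^ 2) + ubar t / (R i t))) t) :
    HasDerivAt
      (fun τ => (∑ i, (1/2) * (R i τ) ^ 2) -
        ubar τ * ((∑ i, (1/3) * (R i τ) ^ 3) - V₀ / (4 * Real.pi)))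
      (-∑ i, (Hside (R i t) / R i t) * (1 - ubar t * R i t) ^ 2) t ∧
    (-∑ i, (Hside (R i t) / R i t) * (1 - ubar t * R i t) ^ 2) ≤ 0 := by
  have hF : (fun τ => (∑ i, (1/2) * (R i τ) ^ 2) -
      ubar τ * ((∑ i, (1/3) * (R i τ) ^ 3) - V₀ / (4 * Real.pi))) =
      fun τ => ∑ i, (1/2) * (R i τ) ^ 2 := by
    funext τ
    rw [sum_third_cube_sub_eq_zero (R · τ) V₀ (hvol τ), mul_zero, sub_zero]
  refine ⟨?_, neg_nonpos.mpr (sum_nonneg fun i _ => mul_nonneg (Hside_div_nonneg _) (sq_nonneg _))⟩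
  rw [hF, sum_Hside_div_mul_sq (R · t) (ubar t) (hubar t), neg_neg]
  convert hasDerivAt_sum_half_sq R _ t hode using 1
  simp only [mul_Hside_mul_droplet_rate]

theorem droplet_energy_decay (N : ℕ) (R : Fin N → ℝ → ℝ) (V₀ t : ℝ)
    (ubar : ℝ → ℝ)
    (hubar : ∀ τ, ubar τ = (∑ j, Hside (R j τ)) / (∑ j, Hside (R j τ) * R j τ))
    (hpos : ∀ i τ, 0 < R i τ)
    (hvol : ∀ τ, ∑ i, (4 * Real.pi / 3) * (R i τ) ^ 3 = V₀)
    (hode : ∀ i, HasDerivAt (R i)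
      (Hside (R i t) * (-(1 / (R i t) ^ 2) + ubar t / (R i t))) t)
    (u' : ℝ) (hu : HasDerivAt ubar u' t) :
    HasDerivAt
      (fun τ => (∑ i, (1/2) * (R i τ) ^ 2) -
        ubar τ * ((∑ i, (1/3) * (R i τ) ^ 3) - V₀ / (4 * Real.pi)))
      (-∑ i, (Hside (R i t) / R i t) * (1 - ubar t * R i t) ^ 2) t ∧
    (-∑ i, (Hside (R i t) / R i t) * (1 - ubar t * R i t) ^ 2) ≤ 0 :=
  droplet_energy_decay_general N R V₀ t ubar hubar hvol hode
end

section
/- The droplet dynamics are a gradient flow: with λ = ū, the partial derivative ∂F/∂Rᵢ of F = Σⱼ (1/2)Rⱼ² - λ Σⱼ (1/3)Rⱼ³ + const equals Rᵢ - ū Rᵢ², and hence dRᵢ/dt = -m(Rᵢ) ∂F/∂Rᵢ with mobility m(Rᵢ) = H(Rᵢ)/Rᵢ³, so that dF/dt = -Σᵢ m(Rᵢ)(∂F/∂Rᵢ)² ≤ 0. -/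
noncomputable def mob (r : ℝ) : ℝ := Hside r / r ^ 3

/-!
The free energy is a sum of one-droplet terms `R²/2 - ū R³/3`, whose derivative is
`R - ū R²`. Factoring `H(R)/R³` out of the growth law exhibits it as `-m(R) ∂F/∂R`,
so the chain rule gives `dF/dt = -Σ m(Rᵢ) (∂F/∂Rᵢ)²`, which is nonpositive since `m ≥ 0`.
-/

open Finset Function

lemma mob_nonneg (r : ℝ) : 0 ≤ mob r := by
  unfold mob Hside
  split_ifs with hr
  · positivity
  · simp

lemma Hside_mul_growth_eq_neg_mob_mul (r u : ℝ) :
    Hside r * (-(1 / r ^ 2) + u / r) = -mob r * (r - u * r ^ 2) := by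
  unfold mob Hside
  split_ifs with hr
  · field_simp
    ring
  · simp

noncomputable def dropletFreeEnergy (u r : ℝ) : ℝ := 1 / 2 * r ^ 2 - u * (1 / 3) * r ^ 3

lemma hasDerivAt_dropletFreeEnergy (u r : ℝ) :
    HasDerivAt (dropletFreeEnergy u) (r - u * r ^ 2) r := by
  refine (((hasDerivAt_pow 2 r).const_mul (1 / 2 : ℝ)).sub
    ((hasDerivAt_pow 3 r).const_mul (u * (1 / 3)))).congr_deriv ?_
  ring

section Calculus

variable {𝕜 F ι : Type*} [NontriviallyNormedField 𝕜] [NormedAddCommGroup F] [NormedSpace 𝕜 F]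
  [Fintype ι]

lemma hasDerivAt_sum_apply_update [DecidableEq ι] {f : 𝕜 → F} {f' : F} (x : ι → 𝕜) (i : ι)
    (hf : HasDerivAt f f' (x i)) :
    HasDerivAt (fun s => ∑ j, f (update x i s j)) f' (x i) := by
  have hsplit :
      (fun s => ∑ j, f (update x i s j)) = fun s => f s + ∑ j ∈ univ.erase i, f (x j) := by
    funext s
    simp only [apply_update (fun _ => f), sum_update_of_mem (mem_univ i), sdiff_singleton_eq_erase]
  rw [hsplit]
  exact hf.add_const _

lemma hasDerivAt_sum_comp {f : 𝕜 → 𝕜} {f' : 𝕜 → 𝕜} {R : ι → 𝕜 → 𝕜} {R' : ι → 𝕜} {t : 𝕜}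
    (hf : ∀ i, HasDerivAt f (f' (R i t)) (R i t)) (hR : ∀ i, HasDerivAt (R i) (R' i) t) :
    HasDerivAt (fun τ => ∑ j, f (R j τ)) (∑ j, f' (R j t) * R' j) t :=
  HasDerivAt.fun_sum fun i _ => (hf i).comp t (hR i)

end Calculus

theorem droplet_gradient_flow_general (N : ℕ) (ubar c : ℝ) (R : Fin N → ℝ → ℝ) (t : ℝ)
    (hode : ∀ i, HasDerivAt (R i)
      (Hside (R i t) * (-(1 / (R i t) ^ 2) + ubar / (R i t))) t) :
    (∀ (x : Fin N → ℝ) (i : Fin N),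
      HasDerivAt
        (fun s => (∑ j, ((1/2) * (Function.update x i s j) ^ 2 -
          ubar * (1/3) * (Function.update x i s j) ^ 3)) + c)
        (x i - ubar * (x i) ^ 2) (x i)) ∧
    (∀ i, HasDerivAt (R i) (-(mob (R i t)) * (R i t - ubar * (R i t) ^ 2)) t) ∧
    HasDerivAt
      (fun τ => (∑ j, ((1/2) * (R j τ) ^ 2 - ubar * (1/3) * (R j τ) ^ 3)) + c)
      (-∑ i, mob (R i t) * (R i t - ubar * (R i t) ^ 2) ^ 2) t ∧
    (-∑ i, mob (R i t) * (R i t - ubar * (R i t) ^ 2) ^ 2) ≤ 0 := by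
  have hflow : ∀ i, HasDerivAt (R i) (-(mob (R i t)) * (R i t - ubar * (R i t) ^ 2)) t :=
    fun i => Hside_mul_growth_eq_neg_mob_mul (R i t) ubar ▸ hode i
  refine ⟨fun x i => ?_, hflow, ?_, ?_⟩
  · exact (hasDerivAt_sum_apply_update x i (hasDerivAt_dropletFreeEnergy ubar (x i))).add_const c
  · refine ((hasDerivAt_sum_comp (f' := fun r => r - ubar * r ^ 2)
      (fun i => hasDerivAt_dropletFreeEnergy ubar (R i t)) hflow).add_const c).congr_deriv ?_
    rw [← sum_neg_distrib]
    exact sum_congr rfl fun i _ => by ring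
  · exact neg_nonpos.2 (sum_nonneg fun i _ => mul_nonneg (mob_nonneg _) (sq_nonneg _))

theorem droplet_gradient_flow (N : ℕ) (ubar c : ℝ) (R : Fin N → ℝ → ℝ) (t : ℝ)
    (hpos : ∀ i, 0 < R i t)
    (hode : ∀ i, HasDerivAt (R i)
      (Hside (R i t) * (-(1 / (R i t) ^ 2) + ubar / (R i t))) t) :
    (∀ (x : Fin N → ℝ) (i : Fin N),
      HasDerivAt
        (fun s => (∑ j, ((1/2) * (Function.update x i s j) ^ 2 -
          ubar * (1/3) * (Function.update x i s j) ^ 3)) + c)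
        (x i - ubar * (x i) ^ 2) (x i)) ∧
    (∀ i, HasDerivAt (R i) (-(mob (R i t)) * (R i t - ubar * (R i t) ^ 2)) t) ∧
    HasDerivAt
      (fun τ => (∑ j, ((1/2) * (R j τ) ^ 2 - ubar * (1/3) * (R j τ) ^ 3)) + c)
      (-∑ i, mob (R i t) * (R i t - ubar * (R i t) ^ 2) ^ 2) t ∧
    (-∑ i, mob (R i t) * (R i t - ubar * (R i t) ^ 2) ^ 2) ≤ 0 :=
  droplet_gradient_flow_general N ubar c R t hode
end
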